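/- arXiv:2505.06201 — 3 statements merged into one kernel-verified Lean document; each statement's English description precedes it below -/
import Mathlib

section
/- Let a = (a_{i,j}) be an M×N array over 𝔽_q with 2-D FFFT A, and let b be the column λ₁-constacyclic shift of a, i.e. b_{0,j} = λ₁·a_{M−1,j} and b_{i,j} = a_{i−1,j} for 1 ≤ i ≤ M−1 and 0 ≤ j ≤ N−1, where λ₁ = γ^M. If B is the 2-D FFFT of b, then B_{θ,φ} = γ ζ₁^θ A_{θ,φ} for all 0 ≤ θ ≤ M−1 and 0 ≤ φ ≤ N−1. -/
/-!
Multiplying the 1-D transform `∑ᵢ aᵢ wⁱ` by `w` shifts every index up by one, and the top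
term `a_{M-1} w^M` wraps around to index `0` as `(w^M · a_{M-1}) w⁰`. At `w = γ ζ₁^θ` one has
`w^M = γ^M = λ₁`, which is exactly the constacyclic shift. The 2-D transform is a sum over
columns `j` of such 1-D transforms weighted by `(β ζ₂^φ)^j`.
-/

open Finset

theorem Fin.sum_mul_pow_of_constacyclic_shift {R : Type*} [CommSemiring R] {m : ℕ}
    (f g : Fin (m + 1) → R) (w : R) (h0 : g 0 = w ^ (m + 1) * f (Fin.last m))
    (hsucc : ∀ i : Fin m, g i.succ = f i.castSucc) :
    ∑ i, g i * w ^ (i : ℕ) = w * ∑ i, f i * w ^ (i : ℕ) := by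
  rw [Fin.sum_univ_succ, Fin.sum_univ_castSucc, mul_add, mul_sum, h0, add_comm]
  congr 1
  · refine sum_congr rfl fun i _ => ?_
    rw [hsucc, Fin.val_succ, Fin.val_castSucc, pow_succ]
    ring
  · rw [Fin.val_zero, Fin.val_last, pow_zero, mul_one, pow_succ]
    ring

theorem sum_sum_mul_pow_mul_pow_comm {R ι κ : Type*} [CommSemiring R] [Fintype ι] [Fintype κ]
    (x : ι → κ → R) (e : ι → ℕ) (d : κ → ℕ) (w v : R) :
    ∑ i, ∑ j, x i j * w ^ e i * v ^ d j = ∑ j, (∑ i, x i j * w ^ e i) * v ^ d j := by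
  rw [sum_comm]
  simp only [sum_mul]

theorem stmt7_general {F K : Type*} [Field F] [Field K] [Algebra F K]
    (M N : ℕ) (hM : 0 < M)
    (lam1 : F)
    (γ β ζ₁ ζ₂ : K) (hγ : γ ^ M = algebraMap F K lam1)
    (hζ₁ : orderOf ζ₁ = M)
    (a b : Fin M → Fin N → F) (A B : Fin M → Fin N → K)
    (hA : ∀ (θ : Fin M) (φ : Fin N), A θ φ =
      ∑ i : Fin M, ∑ j : Fin N,
        algebraMap F K (a i j) * (γ * ζ₁ ^ (θ : ℕ)) ^ (i : ℕ) * (β * ζ₂ ^ (φ : ℕ)) ^ (j : ℕ))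
    (hB : ∀ (θ : Fin M) (φ : Fin N), B θ φ =
      ∑ i : Fin M, ∑ j : Fin N,
        algebraMap F K (b i j) * (γ * ζ₁ ^ (θ : ℕ)) ^ (i : ℕ) * (β * ζ₂ ^ (φ : ℕ)) ^ (j : ℕ))
    (hb0 : ∀ j : Fin N, b ⟨0, hM⟩ j = lam1 * a ⟨M - 1, Nat.sub_lt hM one_pos⟩ j)
    (hbi : ∀ (i : Fin M) (j : Fin N), (i : ℕ) ≠ 0 →
      b i j = a ⟨(i : ℕ) - 1, lt_of_le_of_lt (Nat.sub_le _ _) i.isLt⟩ j) :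
    ∀ (θ : Fin M) (φ : Fin N), B θ φ = γ * ζ₁ ^ (θ : ℕ) * A θ φ := by
  intro θ φ
  obtain ⟨m, rfl⟩ : ∃ m, M = m + 1 := ⟨M - 1, (Nat.succ_pred_eq_of_pos hM).symm⟩
  have hw : (γ * ζ₁ ^ (θ : ℕ)) ^ (m + 1) = algebraMap F K lam1 := by
    have hζ : ζ₁ ^ (m + 1) = 1 := hζ₁ ▸ pow_orderOf_eq_one ζ₁
    rw [mul_pow, ← pow_mul, mul_comm (θ : ℕ), pow_mul, hζ, one_pow, mul_one, hγ]
  rw [hA, hB, sum_sum_mul_pow_mul_pow_comm, sum_sum_mul_pow_mul_pow_comm, mul_sum]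
  refine sum_congr rfl fun j _ => ?_
  have h0 : b 0 j = lam1 * a (Fin.last m) j := hb0 j
  have hsucc (i : Fin m) : b i.succ j = a i.castSucc j := hbi i.succ j (Nat.succ_ne_zero i)
  rw [Fin.sum_mul_pow_of_constacyclic_shift (fun i => algebraMap F K (a i j))
    (fun i => algebraMap F K (b i j)) _ (by simp only [h0, map_mul, hw])
    fun i => by simp only [hsucc]]
  ring

/-- Column λ₁-constacyclic shift property of the 2-D FFFT:
if `b` is the column λ₁-constacyclic shift of `a` (`b 0 j = λ₁ * a (M-1) j`,
`b i j = a (i-1) j` for `i ≥ 1`), then `B θ φ = γ * ζ₁ ^ θ * A θ φ` for all `θ`, `φ`. -/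
theorem stmt7 {F K : Type*} [Field F] [Fintype F] [Field K] [Fintype K] [Algebra F K]
    (p : ℕ) [Fact p.Prime] [CharP F p]
    (M N : ℕ) (hM : 0 < M) (hN : 0 < N) (hMN : Nat.Coprime (M * N) p)
    (lam1 lam2 : F) (h1 : lam1 ≠ 0) (h2 : lam2 ≠ 0)
    (γ β ζ₁ ζ₂ : K) (hγ : γ ^ M = algebraMap F K lam1) (hβ : β ^ N = algebraMap F K lam2)
    (hζ₁ : orderOf ζ₁ = M) (hζ₂ : orderOf ζ₂ = N)
    (a b : Fin M → Fin N → F) (A B : Fin M → Fin N → K)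
    (hA : ∀ (θ : Fin M) (φ : Fin N), A θ φ =
      ∑ i : Fin M, ∑ j : Fin N,
        algebraMap F K (a i j) * (γ * ζ₁ ^ (θ : ℕ)) ^ (i : ℕ) * (β * ζ₂ ^ (φ : ℕ)) ^ (j : ℕ))
    (hB : ∀ (θ : Fin M) (φ : Fin N), B θ φ =
      ∑ i : Fin M, ∑ j : Fin N,
        algebraMap F K (b i j) * (γ * ζ₁ ^ (θ : ℕ)) ^ (i : ℕ) * (β * ζ₂ ^ (φ : ℕ)) ^ (j : ℕ))
    (hb0 : ∀ j : Fin N, b ⟨0, hM⟩ j = lam1 * a ⟨M - 1, Nat.sub_lt hM one_pos⟩ j)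
    (hbi : ∀ (i : Fin M) (j : Fin N), (i : ℕ) ≠ 0 →
      b i j = a ⟨(i : ℕ) - 1, lt_of_le_of_lt (Nat.sub_le _ _) i.isLt⟩ j) :
    ∀ (θ : Fin M) (φ : Fin N), B θ φ = γ * ζ₁ ^ (θ : ℕ) * A θ φ :=
  stmt7_general M N hM lam1 γ β ζ₁ ζ₂ hγ hζ₁ a b A B hA hB hb0 hbi
end

section
/- Let a, b, c be M×N arrays over 𝔽_q with 2-D FFFTs A, B, C respectively. Then c_{i,j} = a_{i,j}·b_{i,j} for all (i,j) if and only if for all (θ,φ) with 0 ≤ θ ≤ M−1 and 0 ≤ φ ≤ N−1, C_{θ,φ} = ((M·1_{𝔽_{q^t}})·(N·1_{𝔽_{q^t}}))^{-1} · Σ_{θ'=0}^{M−1} Σ_{φ'=0}^{N−1} 𝒜_{(θ−θ') mod M, (φ−φ') mod N} · B_{θ',φ'}, where 𝒜_{u,v} = Σ_{i=0}^{M−1} Σ_{j=0}^{N−1} a_{i,j} ζ₁^{iu} ζ₂^{jv} is the 2-D cyclic discrete Fourier transform of a (the 2-D FFFT with γ = β = 1). -/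
/-!
Both transforms are evaluations of the polynomial `∑ c i j X^i Y^j`, at the points
`(γ ζ₁^θ, β ζ₂^φ)` and `(ζ₁^u, ζ₂^v)` respectively. The variables separate, so everything reduces
to one dimension. There, orthogonality of the powers of a primitive `M`-th root of unity turns the
cyclic convolution of the two evaluations into `M` times the evaluation of the pointwise product.
Conversely, the transform is injective: its matrix is a Vandermonde matrix at the `M` distinct
points `γ ζ^θ`.
-/

open Finset

section CommSemiring

variable {R : Type*} [CommSemiring R]

def evalPoly {n : ℕ} (f : Fin n → R) (x : R) : R :=
  ∑ i, f i * x ^ (i : ℕ)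

def evalPoly₂ {m n : ℕ} (f : Fin m → Fin n → R) (x y : R) : R :=
  ∑ i, ∑ j, f i j * x ^ (i : ℕ) * y ^ (j : ℕ)

lemma evalPoly₂_eq_evalPoly_evalPoly {m n : ℕ} (f : Fin m → Fin n → R) (x y : R) :
    evalPoly₂ f x y = evalPoly (fun i => evalPoly (f i) y) x := by
  simp only [evalPoly₂, evalPoly, sum_mul]
  exact sum_congr rfl fun i _ => sum_congr rfl fun j _ => by ring

lemma sum_evalPoly {ι : Type*} {n : ℕ} (s : Finset ι) (f : ι → Fin n → R) (x : R) :
    ∑ t ∈ s, evalPoly (f t) x = evalPoly (∑ t ∈ s, f t) x := by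
  simp only [evalPoly, Finset.sum_apply, sum_mul]
  exact sum_comm

lemma evalPoly_const_mul {n : ℕ} (c : R) (f : Fin n → R) (x : R) :
    evalPoly (fun i => c * f i) x = c * evalPoly f x := by
  simp only [evalPoly, mul_sum, mul_assoc]

end CommSemiring

section Field

variable {K : Type*} [Field K]

lemma pow_val_sub_eq_div {M : ℕ} {ζ : K} (hζ : ζ ^ M = 1) (θ θ' : Fin M) :
    ζ ^ ((θ - θ' : Fin M) : ℕ) = ζ ^ (θ : ℕ) / ζ ^ (θ' : ℕ) := by
  have hζ0 : ζ ≠ 0 := ne_zero_pow θ.pos.ne' (by simp [hζ])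
  have hmod : ((θ - θ' : Fin M) : ℕ) + θ' ≡ θ [MOD M] := by
    have hsum : M - θ' + θ + θ' = θ + M := by omega
    rw [Fin.sub_def, Nat.ModEq, Nat.mod_add_mod, hsum, Nat.add_mod_right]
  rw [eq_div_iff (pow_ne_zero _ hζ0), ← pow_add, pow_eq_pow_mod _ hζ, hmod, ← pow_eq_pow_mod _ hζ]

lemma sum_range_pow_eq_zero {M : ℕ} {ρ : K} (hρ : ρ ^ M = 1) (hρ1 : ρ ≠ 1) :
    ∑ t ∈ range M, ρ ^ t = 0 := by
  rw [geom_sum_eq hρ1, hρ, sub_self, zero_div]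

/-- Orthogonality of the characters `θ ↦ ζ^(θ k)` of `ℤ/M`. -/
lemma IsPrimitiveRoot.sum_pow_div_pow {M : ℕ} {ζ : K} (hζ : IsPrimitiveRoot ζ M) (i k : Fin M) :
    ∑ θ : Fin M, (ζ ^ (θ : ℕ)) ^ (k : ℕ) / (ζ ^ (θ : ℕ)) ^ (i : ℕ) =
      if i = k then (M : K) else 0 := by
  have hζ0 : ζ ≠ 0 := hζ.ne_zero i.pos.ne'
  have hterm : ∀ θ : Fin M, (ζ ^ (θ : ℕ)) ^ (k : ℕ) / (ζ ^ (θ : ℕ)) ^ (i : ℕ)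
      = (ζ ^ (k : ℕ) / ζ ^ (i : ℕ)) ^ (θ : ℕ) := fun θ => by
    rw [div_pow, pow_right_comm, pow_right_comm ζ (θ : ℕ)]
  simp_rw [hterm]
  rw [Fin.sum_univ_eq_sum_range (fun t => (ζ ^ (k : ℕ) / ζ ^ (i : ℕ)) ^ t)]
  split_ifs with hik
  · simp [hik, div_self (pow_ne_zero _ hζ0)]
  · refine sum_range_pow_eq_zero ?_ ?_
    · rw [div_pow, ← pow_mul, ← pow_mul, pow_mul', pow_mul' ζ, hζ.pow_eq_one, one_pow, one_pow,
        div_one]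
    · rw [Ne, div_eq_one_iff_eq (pow_ne_zero _ hζ0)]
      exact fun h => hik (Fin.ext (hζ.pow_inj k.2 i.2 h).symm)

lemma IsPrimitiveRoot.sum_evalPoly_mul_evalPoly {M : ℕ} {ζ : K} (hζ : IsPrimitiveRoot ζ M)
    (f g : Fin M → K) (x : K) (θ : Fin M) :
    ∑ θ' : Fin M, evalPoly f (ζ ^ ((θ - θ' : Fin M) : ℕ)) * evalPoly g (x * ζ ^ (θ' : ℕ))
      = M * evalPoly (f * g) (x * ζ ^ (θ : ℕ)) := by
  calc ∑ θ' : Fin M, evalPoly f (ζ ^ ((θ - θ' : Fin M) : ℕ)) * evalPoly g (x * ζ ^ (θ' : ℕ))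
      = ∑ θ' : Fin M, ∑ i, ∑ k, f i * g k * (ζ ^ (θ : ℕ)) ^ (i : ℕ) * x ^ (k : ℕ) *
          ((ζ ^ (θ' : ℕ)) ^ (k : ℕ) / (ζ ^ (θ' : ℕ)) ^ (i : ℕ)) := by
        refine sum_congr rfl fun θ' _ => ?_
        rw [pow_val_sub_eq_div hζ.pow_eq_one, evalPoly, evalPoly, sum_mul_sum]
        exact sum_congr rfl fun i _ => sum_congr rfl fun k _ => by ring
    _ = ∑ i, ∑ k, f i * g k * (ζ ^ (θ : ℕ)) ^ (i : ℕ) * x ^ (k : ℕ) *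
          ∑ θ' : Fin M, (ζ ^ (θ' : ℕ)) ^ (k : ℕ) / (ζ ^ (θ' : ℕ)) ^ (i : ℕ) := by
        simp only [mul_sum]
        rw [sum_comm]
        exact sum_congr rfl fun i _ => sum_comm
    _ = M * evalPoly (f * g) (x * ζ ^ (θ : ℕ)) := by
        simp only [hζ.sum_pow_div_pow, mul_ite, mul_zero, sum_ite_eq, mem_univ, if_true, evalPoly,
          mul_sum, Pi.mul_apply]
        exact sum_congr rfl fun i _ => by ring

lemma sum_evalPoly₂_mul_evalPoly₂ {M N : ℕ} {ζ₁ ζ₂ : K} (hζ₁ : IsPrimitiveRoot ζ₁ M)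
    (hζ₂ : IsPrimitiveRoot ζ₂ N) (f g : Fin M → Fin N → K) (x y : K) (θ : Fin M) (φ : Fin N) :
    ∑ θ' : Fin M, ∑ φ' : Fin N,
        evalPoly₂ f (ζ₁ ^ ((θ - θ' : Fin M) : ℕ)) (ζ₂ ^ ((φ - φ' : Fin N) : ℕ)) *
          evalPoly₂ g (x * ζ₁ ^ (θ' : ℕ)) (y * ζ₂ ^ (φ' : ℕ))
      = M * N * evalPoly₂ (f * g) (x * ζ₁ ^ (θ : ℕ)) (y * ζ₂ ^ (φ : ℕ)) := by
  have hrow : ∀ i, ∑ φ' : Fin N, evalPoly (f i) (ζ₂ ^ ((φ - φ' : Fin N) : ℕ)) *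
      evalPoly (g i) (y * ζ₂ ^ (φ' : ℕ)) = N * evalPoly ((f * g) i) (y * ζ₂ ^ (φ : ℕ)) :=
    fun i => hζ₂.sum_evalPoly_mul_evalPoly (f i) (g i) y φ
  simp only [evalPoly₂_eq_evalPoly_evalPoly]
  rw [sum_comm]
  simp only [hζ₁.sum_evalPoly_mul_evalPoly, ← mul_sum, sum_evalPoly]
  simp only [Finset.sum_fn, Pi.mul_apply, hrow, evalPoly_const_mul]
  ring

lemma IsPrimitiveRoot.eq_of_evalPoly_eq {M : ℕ} {x ζ : K} (hx : x ≠ 0) (hζ : IsPrimitiveRoot ζ M)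
    {f g : Fin M → K}
    (h : ∀ θ : Fin M, evalPoly f (x * ζ ^ (θ : ℕ)) = evalPoly g (x * ζ ^ (θ : ℕ))) :
    f = g := by
  set v : Fin M → K := fun θ => x * ζ ^ (θ : ℕ)
  have hv : Function.Injective v := fun θ θ' hθ =>
    Fin.ext (hζ.pow_inj θ.2 θ'.2 (mul_left_cancel₀ hx hθ))
  have hdet : IsUnit (Matrix.vandermonde v) :=
    (Matrix.isUnit_iff_isUnit_det _).mpr (Matrix.det_vandermonde_ne_zero_iff.mpr hv).isUnit
  refine Matrix.mulVec_injective_iff_isUnit.mpr hdet (funext fun θ => ?_)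
  simpa only [Matrix.mulVec, dotProduct, Matrix.vandermonde_apply, evalPoly, mul_comm] using h θ

lemma eq_iff_forall_evalPoly₂_eq {M N : ℕ} {x y ζ₁ ζ₂ : K} (hx : x ≠ 0) (hy : y ≠ 0)
    (hζ₁ : IsPrimitiveRoot ζ₁ M) (hζ₂ : IsPrimitiveRoot ζ₂ N) {f g : Fin M → Fin N → K} :
    f = g ↔ ∀ (θ : Fin M) (φ : Fin N), evalPoly₂ f (x * ζ₁ ^ (θ : ℕ)) (y * ζ₂ ^ (φ : ℕ)) =
      evalPoly₂ g (x * ζ₁ ^ (θ : ℕ)) (y * ζ₂ ^ (φ : ℕ)) := by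
  refine ⟨fun h _ _ => h ▸ rfl, fun h => ?_⟩
  simp only [evalPoly₂_eq_evalPoly_evalPoly] at h
  have hcol : ∀ φ : Fin N, (fun i => evalPoly (f i) (y * ζ₂ ^ (φ : ℕ))) =
      fun i => evalPoly (g i) (y * ζ₂ ^ (φ : ℕ)) :=
    fun φ => hζ₁.eq_of_evalPoly_eq hx fun θ => h θ φ
  exact funext fun i => hζ₂.eq_of_evalPoly_eq hy fun φ => congrFun (hcol φ) i

end Field

theorem stmt9_general {F K : Type*} [Field F] [Field K] [Algebra F K]
    (p : ℕ) [CharP F p]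
    (M N : ℕ) (hM : 0 < M) (hN : 0 < N) (hMN : Nat.Coprime (M * N) p)
    (lam1 lam2 : F) (h1 : lam1 ≠ 0) (h2 : lam2 ≠ 0)
    (γ β ζ₁ ζ₂ : K) (hγ : γ ^ M = algebraMap F K lam1) (hβ : β ^ N = algebraMap F K lam2)
    (hζ₁ : orderOf ζ₁ = M) (hζ₂ : orderOf ζ₂ = N)
    (a b c : Fin M → Fin N → F) (B C 𝒜 : Fin M → Fin N → K)
    (hB : ∀ (θ : Fin M) (φ : Fin N), B θ φ =
      ∑ i : Fin M, ∑ j : Fin N,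
        algebraMap F K (b i j) * (γ * ζ₁ ^ (θ : ℕ)) ^ (i : ℕ) * (β * ζ₂ ^ (φ : ℕ)) ^ (j : ℕ))
    (hC : ∀ (θ : Fin M) (φ : Fin N), C θ φ =
      ∑ i : Fin M, ∑ j : Fin N,
        algebraMap F K (c i j) * (γ * ζ₁ ^ (θ : ℕ)) ^ (i : ℕ) * (β * ζ₂ ^ (φ : ℕ)) ^ (j : ℕ))
    (h𝒜 : ∀ (u : Fin M) (v : Fin N), 𝒜 u v =
      ∑ i : Fin M, ∑ j : Fin N,
        algebraMap F K (a i j) * ζ₁ ^ ((i : ℕ) * (u : ℕ)) * ζ₂ ^ ((j : ℕ) * (v : ℕ))) :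
    (∀ (i : Fin M) (j : Fin N), c i j = a i j * b i j) ↔
      ∀ (θ : Fin M) (φ : Fin N), C θ φ =
        ((M : K) * (N : K))⁻¹ *
          ∑ θ' : Fin M, ∑ φ' : Fin N, 𝒜 (θ - θ') (φ - φ') * B θ' φ' := by
  have : CharP K p := charP_of_injective_algebraMap (algebraMap F K).injective p
  have : Invertible ((M * N : ℕ) : K) := invertibleOfCoprime hMN
  have hMN0 : (M : K) * N ≠ 0 := by exact_mod_cast Invertible.ne_zero ((M * N : ℕ) : K)
  have hγ0 : γ ≠ 0 := fun h => h1 (by simpa [h, zero_pow hM.ne'] using hγ.symm)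
  have hβ0 : β ≠ 0 := fun h => h2 (by simpa [h, zero_pow hN.ne'] using hβ.symm)
  have hζ₁' : IsPrimitiveRoot ζ₁ M := hζ₁ ▸ IsPrimitiveRoot.orderOf ζ₁
  have hζ₂' : IsPrimitiveRoot ζ₂ N := hζ₂ ▸ IsPrimitiveRoot.orderOf ζ₂
  have hconv : ∀ (θ : Fin M) (φ : Fin N), ((M : K) * N)⁻¹ *
      ∑ θ' : Fin M, ∑ φ' : Fin N, 𝒜 (θ - θ') (φ - φ') * B θ' φ' =
        evalPoly₂ (fun i j => algebraMap F K (a i j) * algebraMap F K (b i j))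
          (γ * ζ₁ ^ (θ : ℕ)) (β * ζ₂ ^ (φ : ℕ)) := fun θ φ => by
    simp only [h𝒜, hB, pow_mul']
    exact (inv_mul_eq_iff_eq_mul₀ hMN0).mpr
      (sum_evalPoly₂_mul_evalPoly₂ hζ₁' hζ₂' _ _ γ β θ φ)
  have hC' : ∀ (θ : Fin M) (φ : Fin N), C θ φ = evalPoly₂ (fun i j => algebraMap F K (c i j))
      (γ * ζ₁ ^ (θ : ℕ)) (β * ζ₂ ^ (φ : ℕ)) := hC
  calc (∀ (i : Fin M) (j : Fin N), c i j = a i j * b i j)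
      ↔ (fun i j => algebraMap F K (c i j)) =
          fun i j => algebraMap F K (a i j) * algebraMap F K (b i j) := by
        simp only [funext_iff, ← map_mul, (algebraMap F K).injective.eq_iff]
    _ ↔ _ := by
        rw [eq_iff_forall_evalPoly₂_eq hγ0 hβ0 hζ₁' hζ₂']
        simp only [hC', hconv]

/-- 2-D convolution property (multiplication to convolution):
`c i j = a i j * b i j` for all `(i,j)` iff for all `(θ,φ)`,
`C θ φ = (M * N)⁻¹ * ∑ θ' φ', 𝒜 (θ - θ') (φ - φ') * B θ' φ'`, where
`𝒜 u v = ∑ i j, a i j * ζ₁^(i*u) * ζ₂^(j*v)` is the 2-D cyclic DFT of `a` (the 2-D FFFT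
with `γ = β = 1`), and the index differences are taken mod `M`, `N` (`Fin` subtraction). -/
theorem stmt9 {F K : Type*} [Field F] [Fintype F] [Field K] [Fintype K] [Algebra F K]
    (p : ℕ) [Fact p.Prime] [CharP F p]
    (M N : ℕ) (hM : 0 < M) (hN : 0 < N) (hMN : Nat.Coprime (M * N) p)
    (lam1 lam2 : F) (h1 : lam1 ≠ 0) (h2 : lam2 ≠ 0)
    (γ β ζ₁ ζ₂ : K) (hγ : γ ^ M = algebraMap F K lam1) (hβ : β ^ N = algebraMap F K lam2)
    (hζ₁ : orderOf ζ₁ = M) (hζ₂ : orderOf ζ₂ = N)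
    (a b c : Fin M → Fin N → F) (A B C 𝒜 : Fin M → Fin N → K)
    (hA : ∀ (θ : Fin M) (φ : Fin N), A θ φ =
      ∑ i : Fin M, ∑ j : Fin N,
        algebraMap F K (a i j) * (γ * ζ₁ ^ (θ : ℕ)) ^ (i : ℕ) * (β * ζ₂ ^ (φ : ℕ)) ^ (j : ℕ))
    (hB : ∀ (θ : Fin M) (φ : Fin N), B θ φ =
      ∑ i : Fin M, ∑ j : Fin N,
        algebraMap F K (b i j) * (γ * ζ₁ ^ (θ : ℕ)) ^ (i : ℕ) * (β * ζ₂ ^ (φ : ℕ)) ^ (j : ℕ))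
    (hC : ∀ (θ : Fin M) (φ : Fin N), C θ φ =
      ∑ i : Fin M, ∑ j : Fin N,
        algebraMap F K (c i j) * (γ * ζ₁ ^ (θ : ℕ)) ^ (i : ℕ) * (β * ζ₂ ^ (φ : ℕ)) ^ (j : ℕ))
    (h𝒜 : ∀ (u : Fin M) (v : Fin N), 𝒜 u v =
      ∑ i : Fin M, ∑ j : Fin N,
        algebraMap F K (a i j) * ζ₁ ^ ((i : ℕ) * (u : ℕ)) * ζ₂ ^ ((j : ℕ) * (v : ℕ))) :
    (∀ (i : Fin M) (j : Fin N), c i j = a i j * b i j) ↔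
      ∀ (θ : Fin M) (φ : Fin N), C θ φ =
        ((M : K) * (N : K))⁻¹ *
          ∑ θ' : Fin M, ∑ φ' : Fin N, 𝒜 (θ - θ') (φ - φ') * B θ' φ' :=
  stmt9_general p M N hM hN hMN lam1 lam2 h1 h2 γ β ζ₁ ζ₂ hγ hβ hζ₁ hζ₂ a b c B C 𝒜 hB hC h𝒜
end

section
/- Let C be a 2-D (λ₁,λ₂)-constacyclic code of area M×N over 𝔽_q with common zero set V_c, where gcd(M,p)=1. Suppose b is an element of an extension field of 𝔽_q with b^N = λ₂ such that (a,b) ∈ V_c for every element a of that extension field with a^M = λ₁. Then for every codeword c ∈ C and every row index i with 0 ≤ i ≤ M−1, the row polynomial c_i(y) = Σ_{j=0}^{N−1} c_{i,j} y^j satisfies c_i(b) = 0. Consequently, if a received array r satisfies r = c + e with c ∈ C, then the row syndromes satisfy r_i(b) = e_i(b) for every i, where r_i and e_i are the i-th row polynomials of r and e. -/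
/-- Evaluation of the bivariate polynomial `∑ i j, c i j * x^i * y^j` associated with an
`M × N` array `c` over `F` at a point `(ab.1, ab.2)` of an extension field `K`. -/
def arrayEval {F K : Type*} [Field F] [Field K] [Algebra F K] {M N : ℕ}
    (c : Fin M → Fin N → F) (ab : K × K) : K :=
  ∑ i : Fin M, ∑ j : Fin N,
    algebraMap F K (c i j) * ab.1 ^ (i : ℕ) * ab.2 ^ (j : ℕ)

/-! Fix `γ` with `γ ^ M = λ₁` and `ζ` of order `M`. Since `λ₁ ≠ 0`, the points `γ ζ ^ k` are `M`
distinct `M`-th roots of `λ₁`. Evaluating a codeword `c` at each `(γ ζ ^ k, b)` shows that the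
vector of row syndromes `(c_i(b))_i` is killed by the Vandermonde matrix of these points, which is
invertible. -/

open Matrix

theorem eq_zero_of_forall_sum_mul_pow_eq_zero {R : Type*} [CommRing R] [IsDomain R] {M : ℕ}
    {v : Fin M → R} (hv : Function.Injective v) {w : Fin M → R}
    (hw : ∀ k, ∑ i, w i * v k ^ (i : ℕ) = 0) : w = 0 := by
  refine eq_zero_of_mulVec_eq_zero (det_vandermonde_ne_zero_iff.mpr hv) (funext fun k => ?_)
  simpa [mulVec, dotProduct, vandermonde_apply, mul_comm] using hw k

section RootsOfUnity

variable {G : Type*} {M : ℕ} {γ ζ : G}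

theorem mul_pow_pow_eq_of_orderOf_eq [CommMonoid G] (hζ : orderOf ζ = M) (k : ℕ) :
    (γ * ζ ^ k) ^ M = γ ^ M := by
  rw [mul_pow, ← pow_mul, mul_comm k, pow_mul, ← hζ, pow_orderOf_eq_one, one_pow, mul_one]

theorem injective_mul_pow_of_orderOf_eq [MonoidWithZero G] [IsLeftCancelMulZero G]
    (hγ : γ ≠ 0) (hζ : orderOf ζ = M) :
    Function.Injective fun k : Fin M => γ * ζ ^ (k : ℕ) := by
  intro i j hij
  have hi : (i : ℕ) < orderOf ζ := hζ ▸ i.isLt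
  have hj : (j : ℕ) < orderOf ζ := hζ ▸ j.isLt
  exact Fin.ext (pow_injOn_Iio_orderOf hi hj (mul_left_cancel₀ hγ hij))

end RootsOfUnity

theorem arrayEval_eq_sum_mul_pow {F K : Type*} [Field F] [Field K] [Algebra F K]
    {M N : ℕ} (c : Fin M → Fin N → F) (a b : K) :
    arrayEval c (a, b) = ∑ i, (∑ j, algebraMap F K (c i j) * b ^ (j : ℕ)) * a ^ (i : ℕ) := by
  simp only [arrayEval, Finset.sum_mul]
  exact Finset.sum_congr rfl fun i _ => Finset.sum_congr rfl fun j _ => by ring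

theorem stmt18_general {F K : Type*} [Field F] [Field K] [Algebra F K]
    (M N : ℕ) [NeZero M]
    (lam1 lam2 : F) (h1 : lam1 ≠ 0)
    (Code : Submodule F (Fin M → Fin N → F))
    (γ ζ₁ : K) (hγ : γ ^ M = algebraMap F K lam1) (hζ₁ : orderOf ζ₁ = M)
    (Vc : Set (K × K))
    (hVc : ∀ ab : K × K, ab ∈ Vc ↔
      ab.1 ^ M = algebraMap F K lam1 ∧ ab.2 ^ N = algebraMap F K lam2 ∧
        ∀ c ∈ Code, arrayEval c ab = 0)
    (b : K)
    (hball : ∀ a : K, a ^ M = algebraMap F K lam1 → ((a, b) : K × K) ∈ Vc) :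
    (∀ c ∈ Code, ∀ i : Fin M,
      ∑ j : Fin N, algebraMap F K (c i j) * b ^ (j : ℕ) = 0) ∧
    (∀ r e : Fin M → Fin N → F, ∀ c ∈ Code, r = c + e →
      ∀ i : Fin M,
        ∑ j : Fin N, algebraMap F K (r i j) * b ^ (j : ℕ) =
          ∑ j : Fin N, algebraMap F K (e i j) * b ^ (j : ℕ)) := by
  have hγ0 : γ ≠ 0 := ne_zero_pow (NeZero.ne M) (hγ ▸ (map_ne_zero _).mpr h1)
  have hrows : ∀ c ∈ Code, ∀ i : Fin M,
      ∑ j : Fin N, algebraMap F K (c i j) * b ^ (j : ℕ) = 0 := fun c hc =>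
    congrFun <| eq_zero_of_forall_sum_mul_pow_eq_zero
      (injective_mul_pow_of_orderOf_eq hγ0 hζ₁) fun k => by
        have hroot := hball _ ((mul_pow_pow_eq_of_orderOf_eq hζ₁ k).trans hγ)
        rw [← arrayEval_eq_sum_mul_pow]
        exact ((hVc _).mp hroot).2.2 c hc
  refine ⟨hrows, fun r e c hc hre i => ?_⟩
  simp [hre, add_mul, Finset.sum_add_distrib, hrows c hc i]

/-- If `b` satisfies `b^N = λ₂` and `(a, b) ∈ V_c` for every `a` with
`a^M = λ₁`, then every row polynomial of every codeword vanishes at `b`; consequently,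
if `r = c + e` with `c ∈ Code`, then the row syndromes satisfy `r_i(b) = e_i(b)`. -/
theorem stmt18 {F K : Type*} [Field F] [Fintype F] [Field K] [Fintype K] [Algebra F K]
    (p : ℕ) [Fact p.Prime] [CharP F p]
    (M N : ℕ) [NeZero M] [NeZero N] (hMp : Nat.Coprime M p)
    (lam1 lam2 : F) (h1 : lam1 ≠ 0) (h2 : lam2 ≠ 0)
    (Code : Submodule F (Fin M → Fin N → F))
    (hcol : ∀ c ∈ Code,
      (fun i j => (if i = 0 then lam1 else 1) * c (i - 1) j) ∈ Code)
    (hrow : ∀ c ∈ Code,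
      (fun i j => (if j = 0 then lam2 else 1) * c i (j - 1)) ∈ Code)
    (γ ζ₁ : K) (hγ : γ ^ M = algebraMap F K lam1) (hζ₁ : orderOf ζ₁ = M)
    (Vc : Set (K × K))
    (hVc : ∀ ab : K × K, ab ∈ Vc ↔
      ab.1 ^ M = algebraMap F K lam1 ∧ ab.2 ^ N = algebraMap F K lam2 ∧
        ∀ c ∈ Code, arrayEval c ab = 0)
    (b : K) (hbN : b ^ N = algebraMap F K lam2)
    (hball : ∀ a : K, a ^ M = algebraMap F K lam1 → ((a, b) : K × K) ∈ Vc) :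
    (∀ c ∈ Code, ∀ i : Fin M,
      ∑ j : Fin N, algebraMap F K (c i j) * b ^ (j : ℕ) = 0) ∧
    (∀ r e : Fin M → Fin N → F, ∀ c ∈ Code, r = c + e →
      ∀ i : Fin M,
        ∑ j : Fin N, algebraMap F K (r i j) * b ^ (j : ℕ) =
          ∑ j : Fin N, algebraMap F K (e i j) * b ^ (j : ℕ)) :=
  stmt18_general M N lam1 lam2 h1 Code γ ζ₁ hγ hζ₁ Vc hVc b hball
end
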